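/- For every k ∈ Z, the level-k subsets Λ_{(k)} = { t₀^{k₀}t₁^{k₁}⋯t_m^{k_m} : Σ_{i=0}^m k_i = k, k_i ∈ Z∖{0}, k_i ≤ k_{i+1} for all i } and Λ'_{(k)} = { (t₀')^{k₀}(t₁')^{k₁}⋯(t_m')^{k_m} : Σ_{i=0}^m k_i = k, k_i ∈ Z∖{0}, k_i ≤ k_{i+1} for all i }, equipped with the ordering of Definition 2 of [DL2], are totally ordered and well-ordered sets. -/
import Mathlib


/-!
**STATEMENT 13.**  For every k ∈ ℤ, the level-k subsets
Λ_{(k)} = { t₀^{k₀}t₁^{k₁}⋯t_m^{k_m} : Σkᵢ = k, kᵢ ∈ ℤ∖{0}, kᵢ ≤ kᵢ₊₁ } and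
Λ'_{(k)} = { (t₀')^{k₀}(t₁')^{k₁}⋯(t_m')^{k_m} : Σkᵢ = k, kᵢ ∈ ℤ∖{0}, kᵢ ≤ kᵢ₊₁ },
equipped with the ordering of Definition 2 of [DL2], are totally ordered and
well-ordered sets.

A monomial in the looping generators `tᵢ` (respectively `tᵢ'`) is encoded by its
finitely supported exponent function `e : ℕ →₀ ℤ` (with `e i` the exponent of the
`i`-th looping generator); the ordering compares total exponent sums, then indices,
then index sequences, then exponents, exactly as in Definition 2 of [DL2].
-/

namespace SkeinSurvey

/-- The total exponent sum of a monomial in the looping generators. -/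
def expSum0 (e : ℕ →₀ ℤ) : ℤ := e.sum fun _ v => v

/-- The index `ind(w)`: the highest index of a looping generator occurring in `w`. -/
def ind0 (e : ℕ →₀ ℤ) : ℕ := e.support.sup id

/-- Rule (b)(ii)(α) of the ordering: the index sequences first differ at a position
where `u` has the smaller index (a smaller first-difference index makes a word
greater, so this means `w < u`). -/
def suppLt0 (w u : ℕ →₀ ℤ) : Prop :=
  ∃ x : ℕ, u x ≠ 0 ∧ w x = 0 ∧ ∀ y : ℕ, y < x → (w y ≠ 0 ↔ u y ≠ 0)

/-- Rules (b)(ii)(β)/(γ) of the ordering: equal index sequences; comparing exponents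
downward from the top index, at the first difference either `|k| < |λ|`, or
`|k| = |λ|` and `k > λ`. -/
def expLt0 (w u : ℕ →₀ ℤ) : Prop :=
  ∃ x : ℕ, (∀ y : ℕ, x < y → w y = u y) ∧
    (|w x| < |u x| ∨ (|w x| = |u x| ∧ u x < w x))

/-- The ordering of Definition 2 of [DL2] on monomials in the looping generators. -/
def ordLt0 (w u : ℕ →₀ ℤ) : Prop :=
  expSum0 w < expSum0 u ∨ (expSum0 w = expSum0 u ∧
    (ind0 w < ind0 u ∨ (ind0 w = ind0 u ∧
      (suppLt0 w u ∨ (w.support = u.support ∧ expLt0 w u)))))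

/-- Membership in the level-`k` set: the exponent function encodes a monomial
`t₀^{k₀}t₁^{k₁}⋯t_m^{k_m}` with consecutive indices `0, 1, …, m`, all exponents
nonzero, exponents in increasing order `kᵢ ≤ kᵢ₊₁`, and total exponent sum `k`. -/
def levelCond (k : ℤ) (e : ℕ →₀ ℤ) : Prop :=
  (∃ m : ℕ, (∀ i ≤ m, e i ≠ 0) ∧ ∀ i : ℕ, m < i → e i = 0) ∧
  (∀ i : ℕ, e (i + 1) ≠ 0 → e i ≤ e (i + 1)) ∧
  expSum0 e = k

/-- The level-`k` subset `Λ_{(k)}` of `Λ^{aug}` (monomials in the `tᵢ`'s). -/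
def LambdaLevel (k : ℤ) : Type := {e : ℕ →₀ ℤ // levelCond k e}

/-- The level-`k` subset `Λ'_{(k)}` (monomials in the `tᵢ'`'s, encoded identically by
their exponent functions). -/
def LambdaLevel' (k : ℤ) : Type := {e : ℕ →₀ ℤ // levelCond k e}



private lemma ind0_spec {k : ℤ} {e : ℕ →₀ ℤ} (he : levelCond k e) :
    ∀ i, e i ≠ 0 ↔ i ≤ ind0 e := by
  obtain ⟨⟨m, h1, h2⟩, -, -⟩ := he
  have hm : ind0 e = m := by
    apply le_antisymm
    · refine Finset.sup_le fun i hi => ?_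
      rw [Finsupp.mem_support_iff] at hi
      show i ≤ m
      by_contra hc
      exact hi (h2 i (by omega))
    · exact Finset.le_sup (f := id) (Finsupp.mem_support_iff.2 (h1 m le_rfl))
  intro i
  rw [hm]
  constructor
  · intro h; by_contra hc; exact h (h2 i (by omega))
  · intro h; exact h1 i h

private lemma supp_eq {k : ℤ} {e : ℕ →₀ ℤ} (he : levelCond k e) :
    e.support = Finset.range (ind0 e + 1) := by
  ext i
  rw [Finsupp.mem_support_iff, Finset.mem_range, ind0_spec he i]
  omega

private def fI (v : ℤ) : ℕ := 2 * v.natAbs + if 0 < v then 0 else 1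

private lemma fI_lt {p q : ℤ} (h : |p| < |q| ∨ (|p| = |q| ∧ q < p)) : fI p < fI q := by
  simp only [Int.abs_eq_natAbs] at h
  unfold fI
  split_ifs <;> omega

private lemma key_trich {p q : ℤ} (h : p ≠ q) :
    (|p| < |q| ∨ (|p| = |q| ∧ q < p)) ∨ (|q| < |p| ∨ (|q| = |p| ∧ p < q)) := by
  simp only [Int.abs_eq_natAbs]; omega

private lemma key_trans {p q s : ℤ} (h1 : |p| < |q| ∨ (|p| = |q| ∧ q < p))
    (h2 : |q| < |s| ∨ (|q| = |s| ∧ s < q)) :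
    |p| < |s| ∨ (|p| = |s| ∧ s < p) := by
  simp only [Int.abs_eq_natAbs] at *; omega

private lemma expLt0_trans {a b c : ℕ →₀ ℤ} (h1 : expLt0 a b) (h2 : expLt0 b c) :
    expLt0 a c := by
  obtain ⟨x, hx, hcx⟩ := h1
  obtain ⟨x', hx', hcx'⟩ := h2
  rcases lt_trichotomy x x' with h | h | h
  · refine ⟨x', fun y hy => ?_, ?_⟩
    · rw [hx y (h.trans hy), hx' y hy]
    · rw [← hx x' h] at hcx'; exact hcx'
  · subst h
    exact ⟨x, fun y hy => (hx y hy).trans (hx' y hy), key_trans hcx hcx'⟩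
  · refine ⟨x, fun y hy => ?_, ?_⟩
    · rw [hx y hy, hx' y (h.trans hy)]
    · rw [hx' x h] at hcx; exact hcx

private lemma ordLt_iff {k : ℤ} {a b : ℕ →₀ ℤ} (ha : levelCond k a) (hb : levelCond k b) :
    ordLt0 a b ↔ (ind0 a < ind0 b ∨ (ind0 a = ind0 b ∧ expLt0 a b)) := by
  have hsa : expSum0 a = k := ha.2.2
  have hsb : expSum0 b = k := hb.2.2
  constructor
  · rintro (h | ⟨-, h | ⟨hind, h | ⟨-, h⟩⟩⟩)
    · exact absurd h (by omega)
    · exact Or.inl h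
    · obtain ⟨x, hbx, hax, -⟩ := h
      have h1 := (ind0_spec hb x).1 hbx
      have h2 : a x ≠ 0 := (ind0_spec ha x).2 (by omega)
      exact absurd hax h2
    · exact Or.inr ⟨hind, h⟩
  · rintro (h | ⟨hind, h⟩)
    · exact Or.inr ⟨by omega, Or.inl h⟩
    · exact Or.inr ⟨by omega, Or.inr ⟨hind,
        Or.inr ⟨by rw [supp_eq ha, supp_eq hb, hind], h⟩⟩⟩

private lemma level_trich {k : ℤ} (a b : {e : ℕ →₀ ℤ // levelCond k e}) :
    ordLt0 a.1 b.1 ∨ a = b ∨ ordLt0 b.1 a.1 := by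
  by_cases hab : a.1 = b.1
  · exact Or.inr (Or.inl (Subtype.ext hab))
  rcases lt_trichotomy (ind0 a.1) (ind0 b.1) with h | h | h
  · exact Or.inl ((ordLt_iff a.2 b.2).2 (Or.inl h))
  · classical
    have hex : ∃ x, a.1 x ≠ b.1 x := by
      by_contra hc; push_neg at hc; exact hab (Finsupp.ext hc)
    obtain ⟨x₀, hx₀⟩ := hex
    set S := (a.1.support ∪ b.1.support).filter (fun x => a.1 x ≠ b.1 x) with hS
    have hmem : ∀ x, x ∈ S ↔ a.1 x ≠ b.1 x := by
      intro x
      simp only [hS, Finset.mem_filter, Finset.mem_union, Finsupp.mem_support_iff]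
      constructor
      · exact fun h => h.2
      · intro h
        refine ⟨?_, h⟩
        by_contra hc; push_neg at hc
        exact h (hc.1.trans hc.2.symm)
    have hne : S.Nonempty := ⟨x₀, (hmem x₀).2 hx₀⟩
    set x := S.max' hne with hx
    have hxd : a.1 x ≠ b.1 x := (hmem x).1 (S.max'_mem hne)
    have htop : ∀ y, x < y → a.1 y = b.1 y := by
      intro y hy
      by_contra hc
      exact absurd (S.le_max' y ((hmem y).2 hc)) (by omega)
    rcases key_trich hxd with hc | hc
    · exact Or.inl ((ordLt_iff a.2 b.2).2 (Or.inr ⟨h, x, htop, hc⟩))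
    · exact Or.inr (Or.inr ((ordLt_iff b.2 a.2).2
        (Or.inr ⟨h.symm, x, fun y hy => (htop y hy).symm, hc⟩)))
  · exact Or.inr (Or.inr ((ordLt_iff b.2 a.2).2 (Or.inl h)))

private lemma level_trans {k : ℤ} (a b c : {e : ℕ →₀ ℤ // levelCond k e})
    (h1 : ordLt0 a.1 b.1) (h2 : ordLt0 b.1 c.1) : ordLt0 a.1 c.1 := by
  rw [ordLt_iff a.2 b.2] at h1
  rw [ordLt_iff b.2 c.2] at h2
  rw [ordLt_iff a.2 c.2]
  rcases h1 with h1 | ⟨h1, he1⟩ <;> rcases h2 with h2 | ⟨h2, he2⟩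
  · exact Or.inl (h1.trans h2)
  · exact Or.inl (by omega)
  · exact Or.inl (by omega)
  · exact Or.inr ⟨h1.trans h2, expLt0_trans he1 he2⟩

private def mu {k : ℤ} (a : {e : ℕ →₀ ℤ // levelCond k e}) : Σ' n : ℕ, Fin (n + 1) → ℕ :=
  ⟨ind0 a.1, fun j => fI (a.1 (ind0 a.1 - j.1))⟩

private lemma level_wf (k : ℤ) :
    WellFounded (fun a b : {e : ℕ →₀ ℤ // levelCond k e} => ordLt0 a.1 b.1) := by
  have hwf : WellFounded (PSigma.Lex (· < · : ℕ → ℕ → Prop)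
      (fun n => Pi.Lex (· < ·) (fun {_ : Fin (n + 1)} => (· < · : ℕ → ℕ → Prop)))) :=
    WellFounded.psigma_lex wellFounded_lt
      (fun n => Pi.Lex.wellFounded (· < ·) (fun _ => wellFounded_lt))
  refine Subrelation.wf ?_ (InvImage.wf mu hwf)
  intro a b h
  rw [ordLt_iff a.2 b.2] at h
  show PSigma.Lex _ _ (mu a) (mu b)
  unfold mu
  rcases h with h | ⟨hind, x, htop, hcmp⟩
  · exact PSigma.Lex.left _ _ h
  · have hx_ne : a.1 x ≠ b.1 x := by
      rcases hcmp with h' | ⟨h', h''⟩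
      · intro he; rw [he] at h'; exact lt_irrefl _ h'
      · omega
    have hxm : x ≤ ind0 b.1 := by
      by_contra hc
      push_neg at hc
      have h1 : a.1 x = 0 := by
        by_contra h0; exact absurd ((ind0_spec a.2 x).1 h0) (by omega)
      have h2 : b.1 x = 0 := by
        by_contra h0; exact absurd ((ind0_spec b.2 x).1 h0) (by omega)
      exact hx_ne (h1.trans h2.symm)
    rw [hind]
    apply PSigma.Lex.right
    refine ⟨⟨ind0 b.1 - x, by omega⟩, fun j hj => ?_, ?_⟩
    · show fI (a.1 (ind0 b.1 - j.1)) = fI (b.1 (ind0 b.1 - j.1))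
      have hj' : j.1 < ind0 b.1 - x := hj
      rw [htop (ind0 b.1 - j.1) (by omega)]
    · show fI (a.1 (ind0 b.1 - (ind0 b.1 - x))) < fI (b.1 (ind0 b.1 - (ind0 b.1 - x)))
      rw [Nat.sub_sub_self hxm]
      exact fI_lt hcmp


/-- **Statement 13** (Diamantis–Lambropoulou).  For every `k ∈ ℤ`, the sets `Λ_{(k)}`
and `Λ'_{(k)}`, equipped with the ordering of Definition 2 of [DL2], are totally
ordered (the order is trichotomous and transitive) and well-ordered (the order is
well-founded). -/
theorem lambda_level_totally_ordered_and_well_ordered (k : ℤ) :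
    ((∀ a b : LambdaLevel k, ordLt0 a.1 b.1 ∨ a = b ∨ ordLt0 b.1 a.1) ∧
      (∀ a b c : LambdaLevel k, ordLt0 a.1 b.1 → ordLt0 b.1 c.1 → ordLt0 a.1 c.1) ∧
      WellFounded (fun a b : LambdaLevel k => ordLt0 a.1 b.1)) ∧
    ((∀ a b : LambdaLevel' k, ordLt0 a.1 b.1 ∨ a = b ∨ ordLt0 b.1 a.1) ∧
      (∀ a b c : LambdaLevel' k, ordLt0 a.1 b.1 → ordLt0 b.1 c.1 → ordLt0 a.1 c.1) ∧
      WellFounded (fun a b : LambdaLevel' k => ordLt0 a.1 b.1)) :=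
  ⟨⟨fun a b => level_trich a b, fun a b c => level_trans a b c, level_wf k⟩,
   ⟨fun a b => level_trich a b, fun a b c => level_trans a b c, level_wf k⟩⟩

end SkeinSurvey
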